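/- arXiv:2011.08267 — 3 statements merged into one kernel-verified Lean document; each statement's English description precedes it below -/
import Mathlib

section
/- Let σ ∈ ℂ with Re σ > 0, let 0 ≤ β < γ ≤ 2π and R > 0. Let C = { w ∈ ℂ : Re w < log R and β < Im(w/σ) < γ }. Then ∫_C e^{2·Re w} dA(w) = ((γ − β)·|σ|² / (2·Re σ)) · R², where dA is two-dimensional Lebesgue measure on ℂ. (Proposition 3.3, first formula: this integral is the area, counted with multiplicity, of the region A = exp(C) bounded by the two logarithmic spirals Γ_β, Γ_γ — the images of the rays arg z = β and arg z = γ under z ↦ z^σ — and the circle |z| = R.) -/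
/-!
Writing `w = x + iy`, one has `Im (w / σ) · |σ|² / Re σ = y - (Im σ / Re σ) x`, so the region
is the image of the half-strip `{x < log R} × (β |σ|² / Re σ, γ |σ|² / Re σ)` under a shear
`(x, y) ↦ (x, y + k x)`. Shears preserve Lebesgue measure and the integrand depends on `x`
only, so the integral is `(γ - β) |σ|² / Re σ · ∫_{-∞}^{log R} e^{2x} dx`, and the last
integral is `R² / 2`.
-/

open Real MeasureTheory Set

namespace MeasurableEquiv

variable {α G : Type*} [MeasurableSpace α] [MeasurableSpace G] [AddGroup G] [MeasurableAdd₂ G]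

def prodShearAdd [MeasurableNeg G] {f : α → G} (hf : Measurable f) : α × G ≃ᵐ α × G where
  toEquiv := (Equiv.refl α).prodShear fun x => Equiv.addRight (f x)
  measurable_toFun := measurable_fst.prodMk (measurable_snd.add (hf.comp measurable_fst))
  measurable_invFun := measurable_fst.prodMk (measurable_snd.add (hf.comp measurable_fst).neg)

end MeasurableEquiv

namespace MeasureTheory

variable {α G : Type*} [MeasurableSpace α] [MeasurableSpace G] [AddGroup G] [MeasurableAdd₂ G]
  (μ : Measure α) (ν : Measure G) [SFinite μ] [SFinite ν] [ν.IsAddRightInvariant]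

lemma measurePreserving_prodShearAdd [MeasurableNeg G] {f : α → G} (hf : Measurable f) :
    MeasurePreserving (MeasurableEquiv.prodShearAdd hf) (μ.prod ν) (μ.prod ν) :=
  (MeasurePreserving.id μ).skew_product (measurable_snd.add (hf.comp measurable_fst)) <|
    ae_of_all _ fun x => map_add_right_eq_self ν (f x)

lemma setIntegral_fst_of_shear {E : Type*} [NormedAddCommGroup E] [NormedSpace ℝ E]
    [MeasurableNeg G] {f : α → G} (hf : Measurable f) (g : α → E) (s : Set α) (t : Set G) :
    ∫ p in {p : α × G | p.1 ∈ s ∧ p.2 + f p.1 ∈ t}, g p.1 ∂(μ.prod ν)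
      = ν.real t • ∫ x in s, g x ∂μ := by
  change ∫ p in MeasurableEquiv.prodShearAdd hf ⁻¹' s ×ˢ t,
    (fun q : α × G => g q.1) (MeasurableEquiv.prodShearAdd hf p) ∂(μ.prod ν) = _
  rw [(measurePreserving_prodShearAdd μ ν hf).setIntegral_preimage_emb
    (MeasurableEquiv.measurableEmbedding _) (fun q => g q.1) (s ×ˢ t),
    ← Measure.prod_restrict, integral_fun_fst]
  simp

end MeasureTheory

namespace Complex

lemma setIntegral_re_of_shear {E : Type*} [NormedAddCommGroup E] [NormedSpace ℝ E]
    (g : ℝ → E) (k : ℝ) (s t : Set ℝ) :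
    ∫ w in {w : ℂ | w.re ∈ s ∧ w.im + k * w.re ∈ t}, g w.re
      = volume.real t • ∫ x in s, g x := by
  rw [← setIntegral_fst_of_shear volume volume (measurable_const_mul k) g s t,
    ← Measure.volume_eq_prod, ← volume_preserving_equiv_real_prod.setIntegral_preimage_emb
      measurableEquivRealProd.measurableEmbedding]
  rfl

lemma im_div_mul_normSq_div_re {σ : ℂ} (hσ : σ.re ≠ 0) (w : ℂ) :
    (w / σ).im * (normSq σ / σ.re) = w.im + -(σ.im / σ.re) * w.re := by
  have hσ' : normSq σ ≠ 0 := normSq_eq_zero.not.2 fun h => hσ (by simp [h])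
  rw [div_im]
  field_simp
  ring

end Complex

lemma integral_exp_two_mul_Iio_log {R : ℝ} (hR : 0 < R) :
    ∫ x in Iio (log R), exp (2 * x) = R ^ 2 / 2 := by
  rw [← integral_Iic_eq_integral_Iio, integral_exp_mul_Iic two_pos,
    show (2 : ℝ) * log R = ((2 : ℕ) : ℝ) * log R by norm_num, exp_nat_mul, exp_log hR]

theorem area_between_log_spirals_general (σ : ℂ) (hσ : 0 < σ.re) (β γ R : ℝ)
    (hβγ : β < γ) (hR : 0 < R) :
    ∫ w in {w : ℂ | w.re < Real.log R ∧ β < (w / σ).im ∧ (w / σ).im < γ},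
        Real.exp (2 * w.re)
      = (γ - β) * ‖σ‖ ^ 2 / (2 * σ.re) * R ^ 2 := by
  have hc : 0 < Complex.normSq σ / σ.re :=
    div_pos (Complex.normSq_pos.2 fun h => hσ.ne' (by simp [h])) hσ
  have hC : {w : ℂ | w.re < Real.log R ∧ β < (w / σ).im ∧ (w / σ).im < γ}
      = {w : ℂ | w.re ∈ Iio (log R) ∧ w.im + -(σ.im / σ.re) * w.re ∈
          Ioo (β * (Complex.normSq σ / σ.re)) (γ * (Complex.normSq σ / σ.re))} := by
    ext w
    simp only [mem_ofPred_eq, mem_Iio, mem_Ioo, ← Complex.im_div_mul_normSq_div_re hσ.ne',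
      mul_lt_mul_iff_left₀ hc]
  rw [hC, Complex.setIntegral_re_of_shear (fun x => exp (2 * x)),
    integral_exp_two_mul_Iio_log hR,
    volume_real_Ioo_of_le (by gcongr), Complex.sq_norm, smul_eq_mul]
  field_simp

/-- Proposition 3.3, first formula: with `C = {w : Re w < log R, β < Im (w/σ) < γ}`,
`∫_C e^{2 Re w} dA(w) = (γ-β)|σ|²/(2 Re σ) · R²`; this integral is the area, with
multiplicity, of the region bounded by the logarithmic spirals `Γ_β`, `Γ_γ` and the
circle `|z| = R`. -/
theorem area_between_log_spirals (σ : ℂ) (hσ : 0 < σ.re) (β γ R : ℝ)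
    (hβ : 0 ≤ β) (hβγ : β < γ) (hγ : γ ≤ 2 * π) (hR : 0 < R) :
    ∫ w in {w : ℂ | w.re < Real.log R ∧ β < (w / σ).im ∧ (w / σ).im < γ},
        Real.exp (2 * w.re)
      = (γ - β) * ‖σ‖ ^ 2 / (2 * σ.re) * R ^ 2 :=
  area_between_log_spirals_general σ hσ β γ R hβγ hR
end

section
/- Let σ ∈ ℂ with Re σ > 0 and Im σ ≠ 0, let 0 ≤ β < γ ≤ 2π and R > 0. Let B = { e^{u} : u ∈ ℂ, β < Im u < γ, Re(σu) < log R } (the exponential map is injective on this set since γ − β ≤ 2π). Then the two-dimensional Lebesgue measure (area) of B equals (Re σ / (4·Im σ)) · ( e^{2γ·Im σ/Re σ} − e^{2β·Im σ/Re σ} ) · R^{2/Re σ}. (Proposition 3.3, second formula: B is the preimage under ψ(z) = z^σ of the region A bounded by the spirals Γ_β, Γ_γ and the circle |z| = R.) -/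
open Real MeasureTheory Set

private lemma interval_exp_two_mul (y d : ℝ) :
    ∫ x in y..d, Real.exp (2 * x) = (Real.exp (2 * d) - Real.exp (2 * y)) / 2 := by
  have h := intervalIntegral.integral_comp_mul_left (a := y) (b := d)
    (fun x => Real.exp x) (two_ne_zero)
  rw [h, integral_exp, smul_eq_mul]
  ring

private lemma integrableOn_exp_two_mul (d : ℝ) :
    IntegrableOn (fun x => Real.exp (2 * x)) (Iic d) := by
  have hc : Continuous fun x : ℝ => Real.exp (2 * x) := by fun_prop
  refine integrableOn_Iic_of_intervalIntegral_norm_bounded (Real.exp (2 * d) / 2) d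
    (fun y => (hc.intervalIntegrable y d).1) Filter.tendsto_id
    (Filter.Eventually.of_forall fun y => ?_)
  simp_rw [Real.norm_eq_abs, abs_of_nonneg (Real.exp_pos _).le, interval_exp_two_mul]
  have := (Real.exp_pos (2 * y)).le
  linarith

private lemma integral_exp_two_mul_Iic (d : ℝ) :
    ∫ x in Iic d, Real.exp (2 * x) = Real.exp (2 * d) / 2 := by
  refine tendsto_nhds_unique
    (intervalIntegral_tendsto_integral_Iic _ (integrableOn_exp_two_mul d) Filter.tendsto_id) ?_
  simp_rw [interval_exp_two_mul]
  have h0 : Filter.Tendsto (fun y : ℝ => Real.exp (2 * y)) Filter.atBot (nhds 0) :=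
    Real.tendsto_exp_atBot.comp (Filter.tendsto_id.const_mul_atBot two_pos)
  have := (h0.const_sub (Real.exp (2 * d))).div_const 2
  simpa using this

private lemma lintegral_exp_two_mul_Iio (d : ℝ) :
    ∫⁻ x in Iio d, ENNReal.ofReal (Real.exp (2 * x)) = ENNReal.ofReal (Real.exp (2 * d) / 2) := by
  rw [Measure.restrict_congr_set Iio_ae_eq_Iic,
    ← ofReal_integral_eq_lintegral_ofReal (integrableOn_exp_two_mul d)
      (Filter.Eventually.of_forall fun x => (Real.exp_pos _).le),
    integral_exp_two_mul_Iic]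

private lemma det_mul_restrict (w : ℂ) :
    ((ContinuousLinearMap.smulRight (1 : ℂ →L[ℂ] ℂ) w).restrictScalars ℝ).det
      = Complex.normSq w := by
  have h : (((ContinuousLinearMap.smulRight (1 : ℂ →L[ℂ] ℂ) w).restrictScalars ℝ) :
      ℂ →ₗ[ℝ] ℂ) = Algebra.lmul ℝ ℂ w := by
    ext z; simp [mul_comm]
  show LinearMap.det _ = _
  rw [h, ← Algebra.norm_apply, Algebra.norm_complex_apply]

/-- Proposition 3.3, second formula: the region
`B = {e^u : β < Im u < γ, Re (σu) < log R}`, which is the preimage under `z ↦ z^σ` of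
the region bounded by the spirals `Γ_β`, `Γ_γ` and the circle `|z| = R`, has area
`(Re σ / (4 Im σ)) (e^{2γ Im σ/Re σ} - e^{2β Im σ/Re σ}) R^{2/Re σ}`. -/
theorem area_preimage_between_log_spirals (σ : ℂ) (hσre : 0 < σ.re) (hσim : σ.im ≠ 0)
    (β γ R : ℝ) (hβ : 0 ≤ β) (hβγ : β < γ) (hγ : γ ≤ 2 * π) (hR : 0 < R) :
    volume {z : ℂ | ∃ u : ℂ, z = Complex.exp u ∧ β < u.im ∧ u.im < γ ∧
        (σ * u).re < Real.log R}
      = ENNReal.ofReal (σ.re / (4 * σ.im) *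
          (Real.exp (2 * γ * σ.im / σ.re) - Real.exp (2 * β * σ.im / σ.re)) *
          R ^ (2 / σ.re)) := by
  set U : Set ℂ := {u : ℂ | β < u.im ∧ u.im < γ ∧ (σ * u).re < Real.log R} with hUdef
  set c : ℝ → ℝ := fun y => (Real.log R + σ.im * y) / σ.re with hcdef
  set a : ℝ := 2 * σ.im / σ.re with hadef
  have ha : a ≠ 0 := div_ne_zero (by simpa using hσim) hσre.ne'
  -- the set is the image of U under exp
  have himg : {z : ℂ | ∃ u : ℂ, z = Complex.exp u ∧ β < u.im ∧ u.im < γ ∧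
      (σ * u).re < Real.log R} = Complex.exp '' U := by
    ext z
    simp only [mem_setOf_eq, mem_image, hUdef]
    constructor
    · rintro ⟨u, rfl, h1, h2, h3⟩; exact ⟨u, ⟨h1, h2, h3⟩, rfl⟩
    · rintro ⟨u, ⟨h1, h2, h3⟩, rfl⟩; exact ⟨u, rfl, h1, h2, h3⟩
  -- U is measurable
  have hU : MeasurableSet U := by
    have : U = {u : ℂ | β < u.im} ∩ ({u : ℂ | u.im < γ} ∩ {u : ℂ | (σ * u).re < Real.log R}) := by
      ext u; simp [hUdef, and_assoc]
    rw [this]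
    exact (measurableSet_lt measurable_const Complex.measurable_im).inter
      ((measurableSet_lt Complex.measurable_im measurable_const).inter
        (measurableSet_lt ((Complex.continuous_re.comp
          (continuous_const.mul continuous_id)).measurable) measurable_const))
  -- exp is injective on U
  have hinj : Set.InjOn Complex.exp U := by
    intro x hx y hy hxy
    obtain ⟨n, rfl⟩ := Complex.exp_eq_exp_iff_exists_int.1 hxy
    have him : (y + n * (2 * π * Complex.I)).im = y.im + n * (2 * π) := by simp
    obtain ⟨hx1, hx2, -⟩ := hx
    obtain ⟨hy1, hy2, -⟩ := hy
    rw [him] at hx1 hx2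
    have hn : n = 0 := by
      rcases lt_trichotomy n 0 with h0 | h0 | h0
      · have : (n : ℝ) ≤ -1 := by exact_mod_cast (by omega : n ≤ -1)
        nlinarith [Real.pi_pos]
      · exact h0
      · have : (1 : ℝ) ≤ n := by exact_mod_cast h0
        nlinarith [Real.pi_pos]
    simp [hn]
  -- the Jacobian of exp
  set f' : ℂ → ℂ →L[ℝ] ℂ := fun u =>
    (ContinuousLinearMap.smulRight (1 : ℂ →L[ℂ] ℂ) (Complex.exp u)).restrictScalars ℝ with hf'def
  have hf' : ∀ u ∈ U, HasFDerivWithinAt Complex.exp (f' u) U u := fun u _ =>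
    ((Complex.hasDerivAt_exp u).hasFDerivAt.restrictScalars ℝ).hasFDerivWithinAt
  rw [himg, ← lintegral_abs_det_fderiv_eq_addHaar_image volume hU hf' hinj]
  have hdet : ∀ u : ℂ, ENNReal.ofReal |(f' u).det| = ENNReal.ofReal (Real.exp (2 * u.re)) := by
    intro u
    rw [hf'def]
    rw [det_mul_restrict, abs_of_nonneg (Complex.normSq_nonneg _), ← Complex.sq_norm,
      Complex.norm_exp, sq, ← Real.exp_add, two_mul]
  simp_rw [hdet]
  -- transfer to ℝ × ℝ
  have htrans := (Complex.volume_preserving_equiv_real_prod.symm Complex.measurableEquivRealProd).setLIntegral_comp_preimage_emb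
    (Complex.measurableEquivRealProd.symm.measurableEmbedding)
    (fun u : ℂ => ENNReal.ofReal (Real.exp (2 * u.re))) U
  set V : Set (ℝ × ℝ) := {p : ℝ × ℝ | (β < p.2 ∧ p.2 < γ) ∧ p.1 < c p.2} with hVdef
  have hVeq : Complex.measurableEquivRealProd.symm ⁻¹' U = V := by
    ext ⟨x, y⟩
    simp only [mem_preimage, Complex.measurableEquivRealProd_symm_apply, hUdef, hVdef,
      mem_setOf_eq, Complex.mul_re]
    constructor
    · rintro ⟨h1, h2, h3⟩
      refine ⟨⟨h1, h2⟩, ?_⟩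
      rw [hcdef, lt_div_iff₀ hσre]
      nlinarith
    · rintro ⟨⟨h1, h2⟩, h3⟩
      refine ⟨h1, h2, ?_⟩
      rw [hcdef, lt_div_iff₀ hσre] at h3
      nlinarith
  have htrans' : ∫⁻ u in U, ENNReal.ofReal (Real.exp (2 * u.re)) ∂volume
      = ∫⁻ p in V, ENNReal.ofReal (Real.exp (2 * p.1)) ∂volume := by
    rw [← htrans, hVeq]; rfl
  rw [htrans']
  have hVm : MeasurableSet V := by
    rw [← hVeq]; exact Complex.measurableEquivRealProd.symm.measurable hU
  -- Tonelli
  have hfm : Measurable fun p : ℝ × ℝ => ENNReal.ofReal (Real.exp (2 * p.1)) :=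
    (Real.continuous_exp.comp (continuous_const.mul continuous_fst)).measurable.ennreal_ofReal
  rw [← lintegral_indicator hVm, Measure.volume_eq_prod,
    lintegral_prod_symm _ (hfm.indicator hVm).aemeasurable]
  have hcc : Continuous c := by
    rw [hcdef]; fun_prop
  have hstep : ∀ y : ℝ, ∫⁻ x : ℝ,
      V.indicator (fun p : ℝ × ℝ => ENNReal.ofReal (Real.exp (2 * p.1))) (x, y)
      = (Ioo β γ).indicator (fun y => ENNReal.ofReal (Real.exp (2 * c y) / 2)) y := by
    intro y
    by_cases hy : y ∈ Ioo β γ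
    · rw [indicator_of_mem hy]
      have heq : ∀ x : ℝ,
          V.indicator (fun p : ℝ × ℝ => ENNReal.ofReal (Real.exp (2 * p.1))) (x, y)
          = (Iio (c y)).indicator (fun x => ENNReal.ofReal (Real.exp (2 * x))) x := by
        intro x
        by_cases hx : x < c y
        · rw [indicator_of_mem (show (x, y) ∈ V from ⟨⟨hy.1, hy.2⟩, hx⟩),
            indicator_of_mem (show x ∈ Iio (c y) from hx)]
        · rw [indicator_of_notMem (fun h => hx h.2),
            indicator_of_notMem (show x ∉ Iio (c y) from hx)]
      simp_rw [heq]
      rw [lintegral_indicator measurableSet_Iio]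
      exact lintegral_exp_two_mul_Iio (c y)
    · rw [indicator_of_notMem hy]
      have heq : ∀ x : ℝ,
          V.indicator (fun p : ℝ × ℝ => ENNReal.ofReal (Real.exp (2 * p.1))) (x, y) = 0 := by
        intro x
        refine indicator_of_notMem (fun h => hy ⟨h.1.1, h.1.2⟩) _
      simp_rw [heq]
      exact lintegral_zero
  simp_rw [hstep]
  rw [lintegral_indicator measurableSet_Ioo]
  -- evaluate the outer integral
  have hcont : Continuous fun y => Real.exp (2 * c y) / 2 := by fun_prop
  have hIntOn : IntegrableOn (fun y => Real.exp (2 * c y) / 2) (Ioo β γ) :=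
    (hcont.integrableOn_Icc).mono_set Ioo_subset_Icc_self
  rw [← ofReal_integral_eq_lintegral_ofReal hIntOn
    (Filter.Eventually.of_forall fun y => by positivity)]
  congr 1
  have h1 : ∫ y in Ioo β γ, Real.exp (2 * c y) / 2 = ∫ y in β..γ, Real.exp (2 * c y) / 2 := by
    rw [intervalIntegral.integral_of_le hβγ.le, integral_Ioc_eq_integral_Ioo]
  rw [h1]
  have h2 : ∀ y : ℝ, Real.exp (2 * c y) / 2 = (R ^ (2 / σ.re) / 2) * Real.exp (a * y) := by
    intro y
    have harg : 2 * c y = Real.log R * (2 / σ.re) + a * y := by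
      rw [hcdef, hadef]; field_simp
    rw [Real.rpow_def_of_pos hR, harg, Real.exp_add]
    ring
  simp_rw [h2]
  rw [intervalIntegral.integral_const_mul]
  have h3 : ∫ y in β..γ, Real.exp (a * y) = a⁻¹ * (Real.exp (a * γ) - Real.exp (a * β)) := by
    rw [intervalIntegral.integral_comp_mul_left (fun x => Real.exp x) ha, integral_exp,
      smul_eq_mul]
  rw [h3]
  have e1 : a * γ = 2 * γ * σ.im / σ.re := by rw [hadef]; ring
  have e2 : a * β = 2 * β * σ.im / σ.re := by rw [hadef]; ring
  rw [e1, e2, hadef]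
  field_simp
  ring
end

section
/- Let α ∈ (0, 2π], let L ∈ ℝ, and set κ = L/α, η = (α − iL)/(2π), and ρ = (α² + L²)/(πα). Let a ∈ ℂ ∖ {0}, write r = |a|, and let θ be the unique real number with κ·log r ≤ θ < κ·log r + 2π and a = r·e^{iθ}. Then |exp(η·(log r + iθ))| = r^{ρ/2} · e^{L·(θ − κ·log r)/(2π)}; in particular |exp(η·(log r + iθ))| ≤ e^{|L|} · r^{ρ/2}, so the spiral branch a^η satisfies |a^η| = O(|a|^{ρ/2}). (Proposition 3.5.) -/
open Real

/-!
Writing `η = (α - iL)/(2π)`, the modulus of `exp (η (log r + iθ))` is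
`exp ((α log r + L θ)/(2π))`. Since `ρ/2 - L κ/(2π) = α/(2π)`, this exponent equals
`(ρ/2) log r + L (θ - κ log r)/(2π)`, and the spiral window gives `0 ≤ θ - κ log r < 2π`,
so the second summand is at most `|L|`.
-/

theorem norm_exp_mul_log_add_I_mul (η : ℂ) (x θ : ℝ) :
    ‖Complex.exp (η * (x + Complex.I * θ))‖ = Real.exp (η.re * x - η.im * θ) := by
  simp [Complex.norm_exp, Complex.mul_re]

theorem sub_I_mul_div_two_pi_re_im (α L : ℝ) :
    ((α - Complex.I * L) / (2 * π)).re = α / (2 * π) ∧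
      ((α - Complex.I * L) / (2 * π)).im = -L / (2 * π) := by
  have h2π : (2 * π : ℂ) = ((2 * π : ℝ) : ℂ) := by push_cast; rfl
  rw [h2π, Complex.div_ofReal_re, Complex.div_ofReal_im]
  simp

theorem spiral_exponent_eq {α : ℝ} (hα : α ≠ 0) (L x θ : ℝ) :
    α / (2 * π) * x - -L / (2 * π) * θ
      = (α ^ 2 + L ^ 2) / (π * α) / 2 * x + L * (θ - L / α * x) / (2 * π) := by
  field_simp
  ring

theorem mul_div_le_abs_of_le {L t c : ℝ} (ht : 0 ≤ t) (htc : t ≤ c) : L * t / c ≤ |L| :=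
  calc L * t / c ≤ |L| * (t / c) := by
        rw [mul_div_assoc]
        exact mul_le_mul_of_nonneg_right (le_abs_self L) (div_nonneg ht (ht.trans htc))
    _ ≤ |L| * 1 := by gcongr; exact div_le_one_of_le₀ htc (ht.trans htc)
    _ = |L| := mul_one _

theorem abs_spiral_power_general (α L : ℝ) (hα0 : 0 < α)
    (κ : ℝ) (hκ : κ = L / α)
    (η : ℂ) (hη : η = (α - Complex.I * L) / (2 * π))
    (ρ : ℝ) (hρ : ρ = (α ^ 2 + L ^ 2) / (π * α))
    (a : ℂ) (ha : a ≠ 0) (r : ℝ) (hr : r = ‖a‖)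
    (θ : ℝ) (hθ₁ : κ * Real.log r ≤ θ) (hθ₂ : θ < κ * Real.log r + 2 * π) :
    ‖Complex.exp (η * (Real.log r + Complex.I * θ))‖
        = r ^ (ρ / 2) * Real.exp (L * (θ - κ * Real.log r) / (2 * π)) ∧
      ‖Complex.exp (η * (Real.log r + Complex.I * θ))‖
        ≤ Real.exp |L| * r ^ (ρ / 2) := by
  have hr0 : 0 < r := hr ▸ norm_pos_iff.mpr ha
  obtain ⟨hre, him⟩ := sub_I_mul_div_two_pi_re_im α L
  have hnorm : ‖Complex.exp (η * (Real.log r + Complex.I * θ))‖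
      = r ^ (ρ / 2) * Real.exp (L * (θ - κ * Real.log r) / (2 * π)) := by
    rw [norm_exp_mul_log_add_I_mul, hη, hre, him, spiral_exponent_eq hα0.ne', Real.exp_add,
      Real.rpow_def_of_pos hr0, mul_comm (Real.log r), hρ, hκ]
  refine ⟨hnorm, ?_⟩
  rw [hnorm, mul_comm]
  gcongr
  exact mul_div_le_abs_of_le (by linarith) (by linarith)

/-- Proposition 3.5: with `κ = L/α`, `η = (α - iL)/(2π)`, `ρ = (α² + L²)/(πα)`, and the
spiral branch of the argument `θ ∈ [κ log r, κ log r + 2π)` of `a` (`r = |a|`), one has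
`|a^η| = r^{ρ/2} e^{L(θ - κ log r)/(2π)} ≤ e^{|L|} r^{ρ/2}`, so `|a^η| = O(|a|^{ρ/2})`. -/
theorem abs_spiral_power (α L : ℝ) (hα0 : 0 < α) (hα2 : α ≤ 2 * π)
    (κ : ℝ) (hκ : κ = L / α)
    (η : ℂ) (hη : η = (α - Complex.I * L) / (2 * π))
    (ρ : ℝ) (hρ : ρ = (α ^ 2 + L ^ 2) / (π * α))
    (a : ℂ) (ha : a ≠ 0) (r : ℝ) (hr : r = ‖a‖)
    (θ : ℝ) (hθ₁ : κ * Real.log r ≤ θ) (hθ₂ : θ < κ * Real.log r + 2 * π)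
    (haθ : a = (r : ℂ) * Complex.exp (Complex.I * θ)) :
    ‖Complex.exp (η * (Real.log r + Complex.I * θ))‖
        = r ^ (ρ / 2) * Real.exp (L * (θ - κ * Real.log r) / (2 * π)) ∧
      ‖Complex.exp (η * (Real.log r + Complex.I * θ))‖
        ≤ Real.exp |L| * r ^ (ρ / 2) :=
  abs_spiral_power_general α L hα0 κ hκ η hη ρ hρ a ha r hr θ hθ₁ hθ₂
end
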